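/- Let c∞ ∈ ℝ^N_{>0} be a complex balance equilibrium of a chemical reaction network, fix λ_1 > 0, and define Φ := F + G on ℝ^N_{>0}, where F(ξ) := λ_1 Σ_{i=1}^N Ψ(ξ_i; c_{i,∞}) and G(ξ) := (1/2) Σ_{r=1}^R k_r c∞^{y_r} Ψ(ξ^{y_r}/c∞^{y_r} ; ξ^{y_r'}/c∞^{y_r'}). Let Φ̂ be the convexification of Φ, i.e. Φ̂(ξ) := sup { h(ξ) : h affine and h ≤ Φ on ℝ^N_{>0} }. Then there exists δ > 0 such that Φ̂(ξ) = Φ(ξ) for all ξ ∈ ℝ^N_{>0} with |ξ − c∞| < δ. -/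

import Mathlib

/- STATEMENT 10: Let c∞ be a strictly positive complex balance equilibrium, λ₁ > 0 and
Φ = F + G with F(ξ) = λ₁ ∑ Ψ(ξ_i; c_{i,∞}) and
G(ξ) = ½ ∑_r k_r c∞^{y_r} Ψ(ξ^{y_r}/c∞^{y_r}; ξ^{y'_r}/c∞^{y'_r}).
Then the convexification Φ̂ of Φ (sup of affine minorants on ℝ^N_{>0}) coincides with Φ
on some ball around c∞ intersected with the positive orthant. -/

namespace Stmt10

noncomputable def cpow {N : ℕ} (c : Fin N → ℝ) (y : Fin N → ℕ) : ℝ :=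
  ∏ i, c i ^ y i

noncomputable def Psi (x y : ℝ) : ℝ := x * Real.log (x / y) - x + y

def IsComplexBalanced {N R : ℕ} (y y' : Fin R → Fin N → ℕ) (k : Fin R → ℝ)
    (z : Fin N → ℝ) : Prop :=
  ∀ yc : Fin N → ℕ,
    ∑ r ∈ Finset.univ.filter (fun r => y r = yc), k r * cpow z (y r) =
    ∑ s ∈ Finset.univ.filter (fun s => y' s = yc), k s * cpow z (y s)

noncomputable def Ffun {N : ℕ} (lam1 : ℝ) (cinf : Fin N → ℝ) (ξ : Fin N → ℝ) : ℝ :=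
  lam1 * ∑ i, Psi (ξ i) (cinf i)

noncomputable def Gfun {N R : ℕ} (y y' : Fin R → Fin N → ℕ) (k : Fin R → ℝ)
    (cinf : Fin N → ℝ) (ξ : Fin N → ℝ) : ℝ :=
  (1 / 2) * ∑ r, k r * cpow cinf (y r) *
    Psi (cpow ξ (y r) / cpow cinf (y r)) (cpow ξ (y' r) / cpow cinf (y' r))

noncomputable def convexification {N : ℕ} (Φ : (Fin N → ℝ) → ℝ) (ξ : Fin N → ℝ) : ℝ :=
  sSup {v : ℝ | ∃ (g : (Fin N → ℝ) →ₗ[ℝ] ℝ) (b : ℝ),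
    (∀ z : Fin N → ℝ, (∀ i, 0 < z i) → g z + b ≤ Φ z) ∧ v = g ξ + b}

/-! ### Auxiliary lemmas -/

open Real Set Filter Topology

lemma log_div_flip {x y : ℝ} (hx : 0 < x) (hy : 0 < y) :
    Real.log (x / y) = - Real.log (y / x) := by
  rw [← Real.log_inv]; congr 1; field_simp

lemma psi_nonneg {x y : ℝ} (hx : 0 < x) (hy : 0 < y) : 0 ≤ Psi x y := by
  have h := Real.log_le_sub_one_of_pos (x := y / x) (by positivity)
  have hxy : x * (y / x) = y := by field_simp
  unfold Psi
  rw [log_div_flip hx hy]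
  nlinarith [hx.le]

lemma psi_pos {x y : ℝ} (hx : 0 < x) (hy : 0 < y) (hne : x ≠ y) : 0 < Psi x y := by
  have hne1 : y / x ≠ 1 := by
    intro h
    exact hne (by field_simp at h; linarith)
  have h := Real.log_lt_sub_one_of_pos (x := y / x) (by positivity) hne1
  have hxy : x * (y / x) = y := by field_simp
  unfold Psi
  rw [log_div_flip hx hy]
  nlinarith

lemma psi_self {x : ℝ} (hx : 0 < x) : Psi x x = 0 := by
  unfold Psi
  rw [div_self hx.ne', Real.log_one]; ring

lemma cpow_pos {N : ℕ} {c : Fin N → ℝ} (hc : ∀ i, 0 < c i) (y : Fin N → ℕ) :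
    0 < cpow c y := by
  unfold cpow
  exact Finset.prod_pos fun i _ => pow_pos (hc i) _

lemma contDiff_cpow {N : ℕ} (y : Fin N → ℕ) {n : ℕ∞} :
    ContDiff ℝ n (fun z : Fin N → ℝ => cpow z y) := by
  unfold cpow
  exact contDiff_prod fun i _ => ((ContinuousLinearMap.proj i :
    (Fin N → ℝ) →L[ℝ] ℝ).contDiff).pow _

lemma contDiffAt_psi_comp {N : ℕ} {n : ℕ∞} {A B : (Fin N → ℝ) → ℝ} {z : Fin N → ℝ}
    (hA : ContDiffAt ℝ n A z) (hB : ContDiffAt ℝ n B z)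
    (hA0 : 0 < A z) (hB0 : 0 < B z) :
    ContDiffAt ℝ n (fun w => Psi (A w) (B w)) z := by
  unfold Psi
  exact ((hA.mul ((hA.div hB hB0.ne').log
    (div_ne_zero hA0.ne' hB0.ne'))).sub hA).add hB

def Upos (N : ℕ) : Set (Fin N → ℝ) := {z | ∀ i, 0 < z i}

lemma isOpen_Upos (N : ℕ) : IsOpen (Upos N) := by
  have : Upos N = ⋂ i, (fun z : Fin N → ℝ => z i) ⁻¹' Ioi 0 := by
    ext z; simp [Upos]
  rw [this]
  exact isOpen_iInter_of_finite fun i =>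
    (continuous_apply i).isOpen_preimage _ isOpen_Ioi

section CD
variable {N R : ℕ} {y y' : Fin R → Fin N → ℕ} {k : Fin R → ℝ} {cinf : Fin N → ℝ}
  {lam1 : ℝ}

lemma contDiffAt_F (hc : ∀ i, 0 < cinf i) {n : ℕ∞} {z : Fin N → ℝ} (hz : z ∈ Upos N) :
    ContDiffAt ℝ n (Ffun lam1 cinf) z := by
  unfold Ffun
  exact contDiffAt_const.mul (ContDiffAt.sum fun i _ =>
    contDiffAt_psi_comp ((ContinuousLinearMap.proj i :
      (Fin N → ℝ) →L[ℝ] ℝ).contDiff.contDiffAt) contDiffAt_const (hz i) (hc i))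

lemma contDiffAt_G (hc : ∀ i, 0 < cinf i) {n : ℕ∞} {z : Fin N → ℝ} (hz : z ∈ Upos N) :
    ContDiffAt ℝ n (Gfun y y' k cinf) z := by
  unfold Gfun
  refine contDiffAt_const.mul (ContDiffAt.sum fun r _ => contDiffAt_const.mul ?_)
  exact contDiffAt_psi_comp ((contDiff_cpow (y r)).contDiffAt.div_const _)
    ((contDiff_cpow (y' r)).contDiffAt.div_const _)
    (div_pos (cpow_pos hz _) (cpow_pos hc _))
    (div_pos (cpow_pos hz _) (cpow_pos hc _))

lemma F_nonneg (hl : 0 ≤ lam1) (hc : ∀ i, 0 < cinf i) {z : Fin N → ℝ} (hz : z ∈ Upos N) :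
    0 ≤ Ffun lam1 cinf z :=
  mul_nonneg hl (Finset.sum_nonneg fun i _ => psi_nonneg (hz i) (hc i))

lemma G_nonneg (hk : ∀ r, 0 < k r) (hc : ∀ i, 0 < cinf i) {z : Fin N → ℝ}
    (hz : z ∈ Upos N) : 0 ≤ Gfun y y' k cinf z := by
  refine mul_nonneg (by norm_num) (Finset.sum_nonneg fun r _ => ?_)
  exact mul_nonneg (mul_nonneg (hk r).le (cpow_pos hc _).le)
    (psi_nonneg (div_pos (cpow_pos hz _) (cpow_pos hc _))
      (div_pos (cpow_pos hz _) (cpow_pos hc _)))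

lemma F_self (hc : ∀ i, 0 < cinf i) : Ffun lam1 cinf cinf = 0 := by
  unfold Ffun
  rw [Finset.sum_eq_zero fun i _ => psi_self (hc i)]; ring

lemma G_self (hc : ∀ i, 0 < cinf i) : Gfun y y' k cinf cinf = 0 := by
  unfold Gfun
  rw [Finset.sum_eq_zero fun r _ => ?_]
  · ring
  · rw [div_self (cpow_pos hc (y r)).ne', div_self (cpow_pos hc (y' r)).ne',
      psi_self one_pos]
    ring

end CD

lemma hasDerivAt_psi {c x : ℝ} (hc : 0 < c) (hx : 0 < x) :
    HasDerivAt (fun s => Psi s c) (Real.log x - Real.log c) x := by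
  have h1 : HasDerivAt (fun s : ℝ => s / c) (1 / c) x := (hasDerivAt_id x).div_const c
  have h2 : HasDerivAt (fun s : ℝ => Real.log (s / c)) ((x / c)⁻¹ * (1 / c)) x :=
    by have := (Real.hasDerivAt_log (div_ne_zero hx.ne' hc.ne')).comp x h1; exact this
  have h3 : HasDerivAt (fun s : ℝ => s * Real.log (s / c))
      (1 * Real.log (x / c) + x * ((x / c)⁻¹ * (1 / c))) x :=
    (hasDerivAt_id x).mul h2
  have h4 := (h3.sub (hasDerivAt_id x)).add_const c
  have : (1 * Real.log (x / c) + x * ((x / c)⁻¹ * (1 / c))) - 1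
      = Real.log x - Real.log c := by
    rw [Real.log_div hx.ne' hc.ne']
    field_simp
    ring
  rw [this] at h4
  exact h4

lemma convexOn_psi {c : ℝ} (hc : 0 < c) :
    ConvexOn ℝ (Ioi (0:ℝ)) (fun x => Psi x c) := by
  apply convexOn_of_deriv2_nonneg (convex_Ioi 0)
  · intro x hx
    exact (hasDerivAt_psi hc hx).continuousAt.continuousWithinAt
  · rw [interior_Ioi]
    intro x hx
    exact (hasDerivAt_psi hc hx).differentiableAt.differentiableWithinAt
  · rw [interior_Ioi]
    intro x hx
    have hev : deriv (fun s => Psi s c) =ᶠ[𝓝 x] fun s => Real.log s - Real.log c := by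
      filter_upwards [IsOpen.mem_nhds isOpen_Ioi hx] with s hs
      exact (hasDerivAt_psi hc hs).deriv
    have hd : DifferentiableAt ℝ (fun s => Real.log s - Real.log c) x :=
      (Real.differentiableAt_log (ne_of_gt hx)).sub_const _
    exact (hd.congr_of_eventuallyEq hev).differentiableWithinAt
  · rw [interior_Ioi]
    intro x hx
    have hev : deriv (fun s => Psi s c) =ᶠ[𝓝 x] fun s => Real.log s - Real.log c := by
      filter_upwards [IsOpen.mem_nhds isOpen_Ioi hx] with s hs
      exact (hasDerivAt_psi hc hs).deriv
    show 0 ≤ deriv (deriv fun x => Psi x c) x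
    rw [hev.deriv_eq]
    have : HasDerivAt (fun s => Real.log s - Real.log c) x⁻¹ x :=
      (Real.hasDerivAt_log (ne_of_gt hx)).sub_const _
    rw [this.deriv]
    exact inv_nonneg.mpr (le_of_lt (mem_Ioi.mp hx))

lemma psi_ray {c ρ μ : ℝ} (hc : 0 < c) (hρ : 0 < ρ) (hρc : ρ < c)
    (hμ1 : μ ≤ Psi (c + ρ) c) (hμ2 : μ ≤ Psi (c - ρ) c)
    {x : ℝ} (hx : 0 < x) (hfar : ρ ≤ |x - c|) :
    (|x - c| / ρ) * μ ≤ Psi x c := by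
  have hcv := convexOn_psi hc
  rcases abs_cases (x - c) with ⟨habs, hge⟩ | ⟨habs, hlt⟩
  · rw [habs] at hfar ⊢
    have hxc' : 0 < x - c := by linarith
    have h := hcv.secant_mono (a := c) (x := c + ρ) (y := x)
      (mem_Ioi.2 hc) (mem_Ioi.2 (by linarith)) (mem_Ioi.2 hx)
      (by intro h; nlinarith [hρ]) (by intro h; nlinarith) (by linarith)
    rw [psi_self hc, sub_zero, sub_zero, show c + ρ - c = ρ by ring] at h
    have h2 := (div_le_div_iff₀ hρ hxc').mp h
    rw [div_mul_eq_mul_div, div_le_iff₀ hρ]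
    nlinarith [mul_le_mul_of_nonneg_left hμ1 hxc'.le]
  · rw [habs] at hfar ⊢
    rw [show -(x - c) = c - x by ring] at hfar ⊢
    have hu : 0 < c - x := by linarith
    have h := hcv.secant_mono (a := c) (x := x) (y := c - ρ)
      (mem_Ioi.2 hc) (mem_Ioi.2 hx) (mem_Ioi.2 (by linarith))
      (by intro h; nlinarith) (by intro h; nlinarith [hρ]) (by linarith)
    rw [psi_self hc, sub_zero, sub_zero, show c - ρ - c = -ρ by ring] at h
    have hx1 : Psi x c / (x - c) = -(Psi x c / (c - x)) := by
      rw [show x - c = -(c - x) by ring, div_neg]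
    have hx2 : Psi (c - ρ) c / (-ρ) = -(Psi (c - ρ) c / ρ) := by rw [div_neg]
    rw [hx1, hx2, neg_le_neg_iff] at h
    have h2 := (div_le_div_iff₀ hρ hu).mp h
    rw [div_mul_eq_mul_div, div_le_iff₀ hρ]
    nlinarith [mul_le_mul_of_nonneg_left hμ2 hu.le]

lemma deriv2_nonneg_of_localmin {g g' : ℝ → ℝ} {K : ℝ}
    (hd : ∀ᶠ t in 𝓝 (0:ℝ), HasDerivAt g (g' t) t)
    (hK : HasDerivAt g' K 0) (hmin : IsLocalMin g 0) : 0 ≤ K := by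
  by_contra hK0
  push_neg at hK0
  have hg'0 : g' 0 = 0 := by
    have h1 : deriv g 0 = g' 0 := hd.self_of_nhds.deriv
    rw [← h1]; exact hmin.deriv_eq_zero
  have hslope : Tendsto (slope g' 0) (𝓝[≠] 0) (𝓝 K) :=
    hasDerivAt_iff_tendsto_slope.mp hK
  have hev : ∀ᶠ t in 𝓝[>] (0:ℝ), slope g' 0 t < 0 :=
    nhdsWithin_mono 0 (fun t (ht : t ∈ Ioi 0) => ne_of_gt ht)
      (hslope.eventually_lt_const hK0)
  have hev2 : ∀ᶠ t in 𝓝[>] (0:ℝ), g' t < 0 := by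
    filter_upwards [hev, self_mem_nhdsWithin] with t ht ht0
    have ht0' : (0:ℝ) < t := ht0
    rw [slope_def_field, hg'0, sub_zero, sub_zero, div_neg_iff] at ht
    rcases ht with ⟨h1, h2⟩ | ⟨h1, h2⟩
    · linarith
    · exact h1
  rw [eventually_nhdsWithin_iff] at hev2
  rcases Metric.eventually_nhds_iff.mp (hev2.and (hd.and hmin)) with ⟨ε, hε, hball⟩
  set t₀ := ε / 2 with ht₀
  have ht₀pos : 0 < t₀ := by positivity
  have hmem : ∀ t ∈ Icc (0:ℝ) t₀, g' t < 0 ∨ t = 0 := by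
    intro t ⟨h1, h2⟩
    rcases eq_or_lt_of_le h1 with h | h
    · right; exact h.symm
    · left
      have : dist t 0 < ε := by
        rw [Real.dist_eq, sub_zero, abs_of_pos h]; linarith
      exact (hball this).1 h
  have hdiff : ∀ t ∈ Icc (0:ℝ) t₀, HasDerivAt g (g' t) t := by
    intro t ⟨h1, h2⟩
    have : dist t 0 < ε := by
      rw [Real.dist_eq, sub_zero, abs_of_nonneg h1]; linarith
    exact (hball this).2.1
  have hanti : StrictAntiOn g (Icc 0 t₀) := by
    apply strictAntiOn_of_deriv_neg (convex_Icc 0 t₀)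
    · exact fun t ht => (hdiff t ht).continuousAt.continuousWithinAt
    · rw [interior_Icc]
      intro t ht
      have h1 : g' t < 0 := by
        rcases hmem t ⟨ht.1.le, ht.2.le⟩ with h | h
        · exact h
        · exact absurd h (ne_of_gt ht.1)
      rw [(hdiff t ⟨ht.1.le, ht.2.le⟩).deriv]
      exact h1
  have hlt : g t₀ < g 0 :=
    hanti (left_mem_Icc.2 ht₀pos.le) (right_mem_Icc.2 ht₀pos.le) ht₀pos
  have hge : g 0 ≤ g t₀ := by
    have : dist t₀ 0 < ε := by
      rw [Real.dist_eq, sub_zero, abs_of_pos ht₀pos]; linarith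
    exact (hball this).2.2
  linarith

section Line
variable {E : Type*} [NormedAddCommGroup E] [NormedSpace ℝ E]

lemma line_hasDerivAt (x v : E) (t : ℝ) :
    HasDerivAt (fun s : ℝ => x + s • v) v t := by
  simpa using ((hasDerivAt_id t).smul_const v).const_add x

lemma lineDeriv1 {f : E → ℝ} {x v : E} {t : ℝ}
    (hf : DifferentiableAt ℝ f (x + t • v)) :
    HasDerivAt (fun s : ℝ => f (x + s • v)) (fderiv ℝ f (x + t • v) v) t :=
  hf.hasFDerivAt.comp_hasDerivAt t (line_hasDerivAt x v t)

lemma lineDeriv2 {f : E → ℝ} {x v : E} {t : ℝ} {Hw : E →L[ℝ] E →L[ℝ] ℝ}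
    (hfd : HasFDerivAt (fderiv ℝ f) Hw (x + t • v)) :
    HasDerivAt (fun s : ℝ => fderiv ℝ f (x + s • v) v) (Hw v v) t := by
  have h1 : HasDerivAt (fun s : ℝ => fderiv ℝ f (x + s • v)) (Hw v) t :=
    hfd.comp_hasDerivAt t (line_hasDerivAt x v t)
  have h2 := h1.clm_apply (hasDerivAt_const t v)
  simpa using h2

end Line

set_option maxHeartbeats 1000000 in
theorem convexification_eq_near_equilibrium {N R : ℕ}
    (y y' : Fin R → Fin N → ℕ) (k : Fin R → ℝ) (hk : ∀ r, 0 < k r)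
    (cinf : Fin N → ℝ) (hcinf : ∀ i, 0 < cinf i)
    (hbal : IsComplexBalanced y y' k cinf)
    (lam1 : ℝ) (hlam1 : 0 < lam1) :
    ∃ δ > (0 : ℝ), ∀ ξ : Fin N → ℝ, (∀ i, 0 < ξ i) → dist ξ cinf < δ →
      convexification (fun z => Ffun lam1 cinf z + Gfun y y' k cinf z) ξ =
        Ffun lam1 cinf ξ + Gfun y y' k cinf ξ := by
  classical
  set G : (Fin N → ℝ) → ℝ := Gfun y y' k cinf with hGdef
  set Φ : (Fin N → ℝ) → ℝ := fun z => Ffun lam1 cinf z + G z with hΦdef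
  have hU : IsOpen (Upos N) := isOpen_Upos N
  have hcU : cinf ∈ Upos N := hcinf
  -- constants
  obtain ⟨M0, hM0⟩ := Finite.exists_le (fun i => cinf i)
  set M := max M0 1 with hMdef
  have hMpos : (0:ℝ) < M := lt_of_lt_of_le one_pos (le_max_right _ _)
  have hMle : ∀ i, cinf i ≤ M := fun i => le_trans (hM0 i) (le_max_left _ _)
  obtain ⟨B0, hB0⟩ := Finite.exists_le (fun i => (cinf i)⁻¹)
  set B := max B0 1 with hBdef
  have hBpos : (0:ℝ) < B := lt_of_lt_of_le one_pos (le_max_right _ _)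
  set cm := B⁻¹ with hcmdef
  have hcmpos : 0 < cm := inv_pos.2 hBpos
  have hcmle : ∀ i, cm ≤ cinf i := by
    intro i
    have h1 : (cinf i)⁻¹ ≤ B := le_trans (hB0 i) (le_max_left _ _)
    rw [hcmdef, inv_le_comm₀ hBpos (hcinf i)] at *
    exact h1
  -- smoothness infrastructure
  have hG2 : ContDiffOn ℝ 2 G (Upos N) := fun z hz =>
    (contDiffAt_G hcinf hz).contDiffWithinAt
  have hGfd : ContDiffOn ℝ 1 (fderiv ℝ G) (Upos N) :=
    hG2.fderiv_of_isOpen hU (by norm_num)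
  set H := fderiv ℝ (fderiv ℝ G) with hHdef
  have hHc : ContinuousOn H (Upos N) :=
    hGfd.continuousOn_fderiv_of_isOpen hU le_rfl
  have hHas : ∀ w ∈ Upos N, HasFDerivAt (fderiv ℝ G) (H w) w := fun w hw =>
    ((hGfd.contDiffAt (hU.mem_nhds hw)).differentiableAt one_ne_zero).hasFDerivAt
  have hGdiffAt : ∀ w ∈ Upos N, DifferentiableAt ℝ G w := fun w hw =>
    (contDiffAt_G (n := 1) hcinf hw).differentiableAt (by norm_num)
  have hΦdiffAt : ∀ w ∈ Upos N, DifferentiableAt ℝ Φ w := fun w hw =>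
    ((contDiffAt_F (n := 1) hcinf hw).add (contDiffAt_G hcinf hw)).differentiableAt (by norm_num)
  have hΦ2 : ContDiffOn ℝ 2 Φ (Upos N) := fun z hz =>
    ((contDiffAt_F hcinf hz).add (contDiffAt_G hcinf hz)).contDiffWithinAt
  have hΦc : ContinuousOn Φ (Upos N) := hΦ2.continuousOn
  have hΦfc : ContinuousOn (fderiv ℝ Φ) (Upos N) :=
    hΦ2.continuousOn_fderiv_of_isOpen hU (by norm_num)
  have hΦ0 : Φ cinf = 0 := by
    rw [hΦdef]; simp only []
    rw [hGdef, F_self hcinf, G_self hcinf]; ring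
  have hΦnonneg : ∀ z ∈ Upos N, 0 ≤ Φ z := fun z hz =>
    add_nonneg (F_nonneg hlam1.le hcinf hz) (G_nonneg hk hcinf hz)
  have hΦmin : IsLocalMin Φ cinf := by
    filter_upwards [hU.mem_nhds hcU] with w hw
    rw [hΦ0]; exact hΦnonneg w hw
  have hΦgrad0 : fderiv ℝ Φ cinf = 0 := hΦmin.fderiv_eq_zero
  -- eventually on the line through cinf
  have hUev : ∀ v : Fin N → ℝ, ∀ᶠ t : ℝ in 𝓝 (0:ℝ), cinf + t • v ∈ Upos N := by
    intro v
    have hcont : Continuous fun t : ℝ => cinf + t • v :=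
      continuous_const.add (continuous_id.smul continuous_const)
    have h0 : (fun t : ℝ => cinf + t • v) 0 = cinf := by simp
    have := hcont.continuousAt (x := (0:ℝ))
    exact this.eventually_mem (by simpa [h0] using hU.mem_nhds hcU)
  -- Hessian of G at cinf is positive semidefinite
  have hpsd : ∀ v : Fin N → ℝ, 0 ≤ H cinf v v := by
    intro v
    have h0 : cinf + (0:ℝ) • v = cinf := by simp
    apply deriv2_nonneg_of_localmin (g := fun t => G (cinf + t • v))
        (g' := fun t => fderiv ℝ G (cinf + t • v) v)
    · filter_upwards [hUev v] with t ht
      exact lineDeriv1 (hGdiffAt _ ht)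
    · have hfd : HasFDerivAt (fderiv ℝ G) (H cinf) (cinf + (0:ℝ) • v) := by
        rw [h0]; exact hHas cinf hcU
      exact lineDeriv2 hfd
    · rw [IsLocalMin, IsMinFilter]
      filter_upwards [hUev v] with t ht
      rw [h0, hGdef, G_self hcinf]
      exact G_nonneg hk hcinf ht
  -- choice of the radius ρ
  have hβpos : (0:ℝ) < lam1 / (4 * M) := by positivity
  have hHcw := hHc cinf hcU
  replace hHcw := (Metric.continuousWithinAt_iff (f := H) (a := cinf) (s := Upos N)).mp hHcw
  obtain ⟨ρ₂, hρ₂pos, hρ₂⟩ := hHcw (lam1 / (4 * M)) hβpos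
  set ρ := min (cm / 2) ρ₂ with hρdef
  have hρpos : 0 < ρ := lt_min (by positivity) hρ₂pos
  have hρcm : ρ ≤ cm / 2 := min_le_left _ _
  have hρlt : ∀ i, ρ < cinf i := fun i =>
    lt_of_le_of_lt hρcm (by have := hcmle i; linarith)
  have hballU : Metric.ball cinf ρ ⊆ Upos N := by
    intro w hw i
    have h1 : dist (w i) (cinf i) ≤ dist w cinf := dist_le_pi_dist w cinf i
    have h2 : dist w cinf < ρ := Metric.mem_ball.mp hw
    have h3 : |w i - cinf i| < ρ := lt_of_le_of_lt (by rw [← Real.dist_eq]; exact h1) h2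
    have hab := abs_lt.mp h3
    have hρl := hρlt i
    linarith [hab.1]
  -- the constant μ
  obtain ⟨B1, hB1⟩ := Finite.exists_le (fun i =>
    max (Psi (cinf i + ρ) (cinf i))⁻¹ (Psi (cinf i - ρ) (cinf i))⁻¹)
  set B2 := max B1 1 with hB2def
  have hB2pos : (0:ℝ) < B2 := lt_of_lt_of_le one_pos (le_max_right _ _)
  set μ := B2⁻¹ with hμdef
  have hμpos : 0 < μ := inv_pos.2 hB2pos
  have hPp : ∀ i, 0 < Psi (cinf i + ρ) (cinf i) := fun i =>
    psi_pos (by have := hcinf i; linarith) (hcinf i) (by intro h; linarith [hρpos])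
  have hPm : ∀ i, 0 < Psi (cinf i - ρ) (cinf i) := fun i =>
    psi_pos (by have := hρlt i; linarith) (hcinf i) (by intro h; linarith [hρpos])
  have hμ1 : ∀ i, μ ≤ Psi (cinf i + ρ) (cinf i) := by
    intro i
    have h1 : (Psi (cinf i + ρ) (cinf i))⁻¹ ≤ B2 :=
      le_trans (le_trans (le_max_left _ _) (hB1 i)) (le_max_left _ _)
    rw [hμdef, inv_le_comm₀ hB2pos (hPp i)] at *
    exact h1
  have hμ2 : ∀ i, μ ≤ Psi (cinf i - ρ) (cinf i) := by
    intro i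
    have h1 : (Psi (cinf i - ρ) (cinf i))⁻¹ ≤ B2 :=
      le_trans (le_trans (le_max_right _ _) (hB1 i)) (le_max_left _ _)
    rw [hμdef, inv_le_comm₀ hB2pos (hPm i)] at *
    exact h1
  -- the quadratic-form lower bound on the ball
  have hquad : ∀ w ∈ Metric.ball cinf ρ, ∀ v : Fin N → ℝ,
      0 ≤ lam1 * ∑ i, (v i) ^ 2 / (w i) + H w v v := by
    intro w hw v
    set s := ∑ i, (v i) ^ 2 with hs
    have hs0 : 0 ≤ s := Finset.sum_nonneg fun i _ => sq_nonneg _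
    have hwU := hballU hw
    have hw2M : ∀ i, w i ≤ 2 * M := by
      intro i
      have h1 : dist (w i) (cinf i) ≤ dist w cinf := dist_le_pi_dist w cinf i
      have h2 : dist w cinf < ρ := Metric.mem_ball.mp hw
      have h3 := (abs_lt.mp (lt_of_le_of_lt (by rw [← Real.dist_eq]; exact h1) h2)).2
      have h4 := hMle i
      have h5 : cm ≤ M := le_trans (hcmle i) (hMle i)
      linarith [hρcm]
    have hF2 : lam1 * (s / (2 * M)) ≤ lam1 * ∑ i, (v i) ^ 2 / (w i) := by
      apply mul_le_mul_of_nonneg_left _ hlam1.le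
      rw [Finset.sum_div]
      apply Finset.sum_le_sum
      intro i _
      exact div_le_div_of_nonneg_left (sq_nonneg _) (hwU i) (hw2M i)
    have hnorm : ‖v‖ ^ 2 ≤ s := by
      have h1 : ‖v‖ ≤ Real.sqrt s := by
        apply pi_norm_le_iff_of_nonneg (Real.sqrt_nonneg s) |>.mpr
        intro i
        rw [Real.norm_eq_abs]
        rw [show |v i| = Real.sqrt ((v i)^2) by rw [Real.sqrt_sq_eq_abs]]
        apply Real.sqrt_le_sqrt
        exact Finset.single_le_sum (f := fun j => (v j)^2)
          (fun j _ => sq_nonneg _) (Finset.mem_univ i)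
      calc ‖v‖ ^ 2 ≤ Real.sqrt s ^ 2 := by
            apply pow_le_pow_left₀ (norm_nonneg v) h1
        _ = s := Real.sq_sqrt hs0
    have hHdiff : |H w v v - H cinf v v| ≤ (lam1 / (4 * M)) * s := by
      have h1 : H w v v - H cinf v v = (H w - H cinf) v v := by
        simp [ContinuousLinearMap.sub_apply]
      have h2 : |(H w - H cinf) v v| ≤ ‖H w - H cinf‖ * ‖v‖ * ‖v‖ := by
        calc |(H w - H cinf) v v| = ‖(H w - H cinf) v v‖ := (Real.norm_eq_abs _).symm
          _ ≤ ‖(H w - H cinf) v‖ * ‖v‖ := ((H w - H cinf) v).le_opNorm v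
          _ ≤ ‖H w - H cinf‖ * ‖v‖ * ‖v‖ :=
              mul_le_mul_of_nonneg_right ((H w - H cinf).le_opNorm v) (norm_nonneg v)
      have h3 : ‖H w - H cinf‖ < lam1 / (4 * M) := by
        refine lt_of_eq_of_lt (dist_eq_norm (H w) (H cinf)).symm ?_
        exact hρ₂ hwU (lt_of_lt_of_le (Metric.mem_ball.mp hw) (min_le_right _ _))
      rw [h1]
      calc |(H w - H cinf) v v| ≤ ‖H w - H cinf‖ * ‖v‖ * ‖v‖ := h2
        _ ≤ (lam1 / (4 * M)) * (‖v‖ * ‖v‖) := by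
            rw [mul_assoc]
            exact mul_le_mul_of_nonneg_right h3.le
              (mul_nonneg (norm_nonneg v) (norm_nonneg v))
        _ ≤ (lam1 / (4 * M)) * s := by
            apply mul_le_mul_of_nonneg_left _ hβpos.le
            rw [← pow_two ‖v‖]
            exact hnorm
    have hpsd' := hpsd v
    have key2 : (lam1 / (4 * M)) * s ≤ lam1 * (s / (2 * M)) := by
      rw [div_mul_eq_mul_div, mul_div_assoc']
      exact div_le_div_of_nonneg_left (mul_nonneg hlam1.le hs0) (by positivity)
        (by linarith [hMpos])
    have habs := abs_le.mp hHdiff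
    linarith [hF2, habs.1]
  -- tangent plane inequality inside the ball
  have hnear : ∀ ξ ∈ Metric.ball cinf ρ, ∀ z ∈ Metric.ball cinf ρ,
      Φ ξ + fderiv ℝ Φ ξ (z - ξ) ≤ Φ z := by
    intro ξ hξ z hz
    set v : Fin N → ℝ := z - ξ with hv
    have hseg : ∀ t ∈ Icc (0:ℝ) 1, ξ + t • v ∈ Metric.ball cinf ρ := fun t ht =>
      (convex_ball cinf ρ).add_smul_sub_mem hξ hz ht
    have hlinepos : ∀ t ∈ Icc (0:ℝ) 1, ∀ i, 0 < (ξ + t • v) i := fun t ht =>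
      hballU (hseg t ht)
    set g' : ℝ → ℝ := fun t =>
      lam1 * ∑ i, (Real.log ((ξ + t • v) i) - Real.log (cinf i)) * v i
        + fderiv ℝ G (ξ + t • v) v with hg'def
    have haff : ∀ (i : Fin N) (t : ℝ), HasDerivAt (fun s : ℝ => ξ i + s * v i) (v i) t := by
      intro i t
      simpa using (hasDerivAt_mul_const (v i)).const_add (ξ i)
    have hA : ∀ t ∈ Icc (0:ℝ) 1, HasDerivAt (fun s => Φ (ξ + s • v)) (g' t) t := by
      intro t ht
      apply HasDerivAt.add
      · show HasDerivAt (fun s => Ffun lam1 cinf (ξ + s • v))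
          (lam1 * ∑ i, (Real.log ((ξ + t • v) i) - Real.log (cinf i)) * v i) t
        unfold Ffun
        apply HasDerivAt.const_mul
        apply HasDerivAt.fun_sum
        intro i _
        have h1 : HasDerivAt (fun s : ℝ => Psi (ξ i + s * v i) (cinf i))
            ((Real.log (ξ i + t * v i) - Real.log (cinf i)) * v i) t :=
          by have := (hasDerivAt_psi (hcinf i) (hlinepos t ht i)).comp t (haff i t); exact this
        exact h1
      · exact lineDeriv1 (hGdiffAt _ (hballU (hseg t ht)))
    set g'' : ℝ → ℝ := fun t =>
      lam1 * ∑ i, (v i) ^ 2 / ((ξ + t • v) i) + H (ξ + t • v) v v with hg''def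
    have hB : ∀ t ∈ Icc (0:ℝ) 1, HasDerivAt g' (g'' t) t := by
      intro t ht
      apply HasDerivAt.add
      · apply HasDerivAt.const_mul
        apply HasDerivAt.fun_sum
        intro i _
        have hpos : 0 < ξ i + t * v i := hlinepos t ht i
        have hlog : HasDerivAt (fun s : ℝ => Real.log (ξ i + s * v i))
            ((ξ i + t * v i)⁻¹ * v i) t :=
          by have := (Real.hasDerivAt_log hpos.ne').comp t (haff i t); exact this
        have h2 := (hlog.sub_const (Real.log (cinf i))).mul_const (v i)
        have h3 : (ξ i + t * v i)⁻¹ * v i * v i = (v i) ^ 2 / ((ξ + t • v) i) := by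
          have : (ξ + t • v) i = ξ i + t * v i := by
            simp [Pi.add_apply, Pi.smul_apply, smul_eq_mul]
          rw [this]
          field_simp
        rw [h3] at h2
        exact h2
      · exact lineDeriv2 (hHas _ (hballU (hseg t ht)))
    have hg''nonneg : ∀ t ∈ Icc (0:ℝ) 1, 0 ≤ g'' t := fun t ht =>
      hquad _ (hseg t ht) v
    have hg'cont : ContinuousOn g' (Icc 0 1) := fun t ht =>
      (hB t ht).continuousAt.continuousWithinAt
    have hg'diff : DifferentiableOn ℝ g' (interior (Icc (0:ℝ) 1)) := by
      rw [interior_Icc]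
      intro t ht
      exact (hB t (Ioo_subset_Icc_self ht)).differentiableAt.differentiableWithinAt
    have hg'mono : MonotoneOn g' (Icc 0 1) := by
      apply monotoneOn_of_deriv_nonneg (convex_Icc 0 1) hg'cont hg'diff
      rw [interior_Icc]
      intro t ht
      rw [(hB t (Ioo_subset_Icc_self ht)).deriv]
      exact hg''nonneg t (Ioo_subset_Icc_self ht)
    have hgcont : ContinuousOn (fun s : ℝ => Φ (ξ + s • v)) (Icc 0 1) := fun t ht =>
      (hA t ht).continuousAt.continuousWithinAt
    obtain ⟨θ, hθ, hslope⟩ := exists_hasDerivAt_eq_slope (fun s : ℝ => Φ (ξ + s • v)) g'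
      zero_lt_one hgcont (fun t ht => hA t (Ioo_subset_Icc_self ht))
    have h10 : ξ + (1:ℝ) • v = z := by
      rw [hv]; simp
    have h00 : ξ + (0:ℝ) • v = ξ := by simp
    have hg'0 : g' 0 = fderiv ℝ Φ ξ v := by
      have h1 : HasDerivAt (fun s : ℝ => Φ (ξ + s • v)) (fderiv ℝ Φ (ξ + (0:ℝ) • v) v) 0 :=
        lineDeriv1 (by rw [h00]; exact hΦdiffAt ξ (hballU hξ))
      have h2 := hA 0 (left_mem_Icc.2 zero_le_one)
      have := h2.unique h1
      rw [this, h00]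
    have hθI : θ ∈ Icc (0:ℝ) 1 := Ioo_subset_Icc_self hθ
    have hmono0θ : g' 0 ≤ g' θ :=
      hg'mono (left_mem_Icc.2 zero_le_one) hθI hθ.1.le
    have hΦzξ : Φ z - Φ ξ = g' θ := by
      rw [hslope, h10, h00]
      norm_num
    rw [← hg'0] at *
    linarith [hmono0θ, hΦzξ]
  -- choose δ
  have hΦcw := hΦc cinf hcU
  rw [Metric.continuousWithinAt_iff] at hΦcw
  have hεpos : (0:ℝ) < lam1 * μ / 8 := by positivity
  obtain ⟨δ₁, hδ₁pos, hδ₁⟩ := hΦcw (lam1 * μ / 8) hεpos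
  have hΦfcw := hΦfc cinf hcU
  replace hΦfcw := (Metric.continuousWithinAt_iff (f := fderiv ℝ Φ) (a := cinf) (s := Upos N)).mp hΦfcw
  have hε2pos : (0:ℝ) < lam1 * μ / (8 * ρ) := by positivity
  obtain ⟨δ₂, hδ₂pos, hδ₂⟩ := hΦfcw (lam1 * μ / (8 * ρ)) hε2pos
  refine ⟨min (min δ₁ δ₂) ρ, lt_min (lt_min hδ₁pos hδ₂pos) hρpos, ?_⟩
  intro ξ hξpos hξdist
  have hξU : ξ ∈ Upos N := hξpos
  have hξρ : dist ξ cinf < ρ := lt_of_lt_of_le hξdist (min_le_right _ _)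
  have hξδ₁ : dist ξ cinf < δ₁ :=
    lt_of_lt_of_le hξdist (le_trans (min_le_left _ _) (min_le_left _ _))
  have hξδ₂ : dist ξ cinf < δ₂ :=
    lt_of_lt_of_le hξdist (le_trans (min_le_left _ _) (min_le_right _ _))
  have hΦξsmall : Φ ξ < lam1 * μ / 8 := by
    have h := hδ₁ hξU hξδ₁
    rw [Real.dist_eq, hΦ0, sub_zero] at h
    exact lt_of_le_of_lt (le_abs_self _) h
  have hLsmall : ‖fderiv ℝ Φ ξ‖ < lam1 * μ / (8 * ρ) := by
    have h := hδ₂ hξU hξδ₂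
    rw [dist_eq_norm, hΦgrad0, sub_zero] at h
    exact h
  -- the global minorant property of the tangent plane at ξ
  have hkey : ∀ z, (∀ i, 0 < z i) → Φ ξ + fderiv ℝ Φ ξ (z - ξ) ≤ Φ z := by
    intro z hzpos
    by_cases hzcase : dist z cinf < ρ
    · exact hnear ξ (Metric.mem_ball.mpr hξρ) z (Metric.mem_ball.mpr hzcase)
    · push_neg at hzcase
      set D := dist z cinf with hDdef
      have hDρ : ρ ≤ D := hzcase
      have hDpos : 0 < D := lt_of_lt_of_le hρpos hDρ
      have hj : ∃ j, D ≤ |z j - cinf j| := by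
        by_contra hcon
        push_neg at hcon
        have : dist z cinf < D := (dist_pi_lt_iff hDpos).mpr (fun j => by
          rw [Real.dist_eq]; exact hcon j)
        exact absurd this (lt_irrefl _)
      obtain ⟨j, hjD⟩ := hj
      have hray := psi_ray (hcinf j) hρpos (hρlt j) (hμ1 j) (hμ2 j) (hzpos j)
        (le_trans hDρ hjD)
      have hFz : lam1 * ((D / ρ) * μ) ≤ Φ z := by
        have h1 : Psi (z j) (cinf j) ≤ ∑ i, Psi (z i) (cinf i) :=
          Finset.single_le_sum (f := fun i => Psi (z i) (cinf i))
            (fun i _ => psi_nonneg (hzpos i) (hcinf i)) (Finset.mem_univ j)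
        have h2 : (D / ρ) * μ ≤ (|z j - cinf j| / ρ) * μ := by
          apply mul_le_mul_of_nonneg_right _ hμpos.le
          gcongr
        have h3 : 0 ≤ G z := G_nonneg hk hcinf hzpos
        have h4 : Ffun lam1 cinf z = lam1 * ∑ i, Psi (z i) (cinf i) := rfl
        have h5 : Φ z = Ffun lam1 cinf z + G z := rfl
        rw [h5, h4]
        calc lam1 * ((D / ρ) * μ) ≤ lam1 * ((|z j - cinf j| / ρ) * μ) :=
              mul_le_mul_of_nonneg_left h2 hlam1.le
          _ ≤ lam1 * Psi (z j) (cinf j) := mul_le_mul_of_nonneg_left hray hlam1.le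
          _ ≤ lam1 * ∑ i, Psi (z i) (cinf i) := mul_le_mul_of_nonneg_left h1 hlam1.le
          _ ≤ lam1 * ∑ i, Psi (z i) (cinf i) + G z := le_add_of_nonneg_right h3
      have hnz : ‖z - ξ‖ ≤ D + ρ := by
        calc ‖z - ξ‖ = dist z ξ := (dist_eq_norm z ξ).symm
          _ ≤ dist z cinf + dist cinf ξ := dist_triangle z cinf ξ
          _ ≤ D + ρ := by
              rw [dist_comm cinf ξ]
              exact add_le_add le_rfl hξρ.le
      have hlin : |fderiv ℝ Φ ξ (z - ξ)| ≤ ‖fderiv ℝ Φ ξ‖ * (D + ρ) := by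
        calc |fderiv ℝ Φ ξ (z - ξ)| = ‖fderiv ℝ Φ ξ (z - ξ)‖ := (Real.norm_eq_abs _).symm
          _ ≤ ‖fderiv ℝ Φ ξ‖ * ‖z - ξ‖ := (fderiv ℝ Φ ξ).le_opNorm _
          _ ≤ ‖fderiv ℝ Φ ξ‖ * (D + ρ) := mul_le_mul_of_nonneg_left hnz (norm_nonneg _)
      have hchain : Φ ξ + fderiv ℝ Φ ξ (z - ξ)
          ≤ lam1 * μ / 8 + (lam1 * μ / (8 * ρ)) * (D + ρ) := by
        have ha := (abs_le.mp hlin).2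
        have h4 : ‖fderiv ℝ Φ ξ‖ * (D + ρ) ≤ (lam1 * μ / (8 * ρ)) * (D + ρ) :=
          mul_le_mul_of_nonneg_right hLsmall.le (by linarith)
        linarith
      have h8ρ : (0:ℝ) < 8 * ρ := by positivity
      have eL : (lam1 * μ / 8 + lam1 * μ / (8 * ρ) * (D + ρ)) * (8 * ρ)
          = lam1 * μ * ρ + lam1 * μ * (D + ρ) := by
        field_simp
      have eR : lam1 * ((D / ρ) * μ) * (8 * ρ) = 8 * (lam1 * μ * D) := by
        field_simp
      have hfinal : lam1 * μ / 8 + (lam1 * μ / (8 * ρ)) * (D + ρ) ≤ lam1 * ((D / ρ) * μ) := by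
        have hmul : (lam1 * μ / 8 + lam1 * μ / (8 * ρ) * (D + ρ)) * (8 * ρ)
            ≤ lam1 * ((D / ρ) * μ) * (8 * ρ) := by
          rw [eL, eR]
          nlinarith [mul_nonneg (mul_nonneg hlam1.le hμpos.le) (sub_nonneg.mpr hDρ),
            mul_nonneg (mul_nonneg hlam1.le hμpos.le) hDpos.le]
        exact le_of_mul_le_mul_right hmul h8ρ
      exact le_trans (le_trans hchain hfinal) hFz
  -- compute the supremum
  show convexification Φ ξ = Φ ξ
  unfold convexification
  have hub : ∀ b ∈ {v : ℝ | ∃ (g : (Fin N → ℝ) →ₗ[ℝ] ℝ) (b' : ℝ),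
      (∀ z : Fin N → ℝ, (∀ i, 0 < z i) → g z + b' ≤ Φ z) ∧ v = g ξ + b'}, b ≤ Φ ξ := by
    rintro b ⟨g, b', hgb, rfl⟩
    exact hgb ξ hξpos
  have hmem : Φ ξ ∈ {v : ℝ | ∃ (g : (Fin N → ℝ) →ₗ[ℝ] ℝ) (b' : ℝ),
      (∀ z : Fin N → ℝ, (∀ i, 0 < z i) → g z + b' ≤ Φ z) ∧ v = g ξ + b'} := by
    refine ⟨(fderiv ℝ Φ ξ : (Fin N → ℝ) →L[ℝ] ℝ).toLinearMap,
      Φ ξ - fderiv ℝ Φ ξ ξ, ?_, by simp⟩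
    intro z hz
    have h1 := hkey z hz
    have h2 : fderiv ℝ Φ ξ (z - ξ) = fderiv ℝ Φ ξ z - fderiv ℝ Φ ξ ξ := map_sub _ _ _
    simp only [ContinuousLinearMap.coe_coe]
    linarith [h2 ▸ h1]
  exact le_antisymm (csSup_le ⟨Φ ξ, hmem⟩ hub) (le_csSup ⟨Φ ξ, hub⟩ hmem)

end Stmt10
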